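/- Let T be an index set, (B_t)_{t∈T} Banach spaces, B = Π_{t∈T} B_t, and X ⊆ B a subspace. If S ⊆ T is such that there exists a continuous linear projection r : B → B with range X fixing X pointwise, and S is r-admissible, then for all r-admissible R with S ⊆ R ⊆ T the restriction map π^R_S maps π_R(X) onto π_S(X), and this restriction π^R_S|_{π_R(X)} : π_R(X) → π_S(X) is a continuous open surjection admitting a continuous linear section y ↦ r_R(i^R_S(y)), where r_R = π_R ∘ r ∘ i_R. -/

import Mathlib

/-
Restricting the identity `π_S = π^R_S ∘ π_R` to `X` shows that `π^R_S` maps `π_R(X)` onto `π_S(X)`.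
For `y ∈ π_S(X)` the vector `r (i_S y)` lies in `X`, and admissibility of `S` says exactly that its
restriction to `S` is `y`; since `i_S = i_R ∘ i^R_S`, the map `y ↦ π_R (r (i_S y))` is a continuous
linear section of `π^R_S`. A continuous linear map with a continuous linear section is open: its
translates `y ↦ σ y + (x - σ (p x))` are continuous local sections through every point `x`.
-/

/-- The restriction map `x ↦ x|_S` from the full product to the subproduct over `S`. -/
def restr {T : Type*} {B : T → Type*} (S : Set T) (x : ∀ t, B t) : ∀ t : S, B (t : T) :=
  fun t => x t

/-- The restriction map `π^R_S` between subproducts, for `S ⊆ R`, as a plain function. -/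
def restrFrom {T : Type*} {B : T → Type*} (S R : Set T) (hSR : S ⊆ R)
    (x : ∀ t : R, B (t : T)) : ∀ t : S, B (t : T) :=
  fun s => x ⟨(s : T), hSR s.2⟩

/-- `S ⊆ T` is `r`-admissible (with respect to the subspace `X`) if
`π_S (r z) = π_S z` whenever `π_S z ∈ π_S(X)`. -/
def RAdmissible {T : Type*} {B : T → Type*} (X : Set (∀ t, B t))
    (r : (∀ t, B t) → (∀ t, B t)) (S : Set T) : Prop :=
  ∀ z : ∀ t, B t, restr S z ∈ restr (B := B) S '' X → restr (B := B) S (r z) = restr S z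

/-- The restriction map `π_S` as a continuous linear map. -/
def restrL {T : Type*} (B : T → Type*)
    [∀ t, NormedAddCommGroup (B t)] [∀ t, NormedSpace ℝ (B t)] (S : Set T) :
    (∀ t, B t) →L[ℝ] (∀ t : S, B (t : T)) :=
  ContinuousLinearMap.pi fun s : S => ContinuousLinearMap.proj (R := ℝ) (s : T)

open Classical in
/-- The section `i_S` of `π_S`, extending by zero outside `S`. -/
noncomputable def extendZ {T : Type*} {B : T → Type*} [∀ t, Zero (B t)] (S : Set T)
    (y : ∀ t : S, B (t : T)) : ∀ t, B t :=
  fun t => if h : t ∈ S then y ⟨t, h⟩ else 0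

open Classical in
/-- The section `i^R_S` of `π^R_S`, extending by zero on `R \ S`. -/
noncomputable def extendZ2 {T : Type*} {B : T → Type*} [∀ t, Zero (B t)] (S R : Set T)
    (y : ∀ t : S, B (t : T)) : ∀ t : R, B (t : T) :=
  fun t => if h : (t : T) ∈ S then y ⟨t, h⟩ else 0

theorem ContinuousLinearMap.isOpenMap_of_rightInverse {𝕜 E F : Type*} [Ring 𝕜]
    [AddCommGroup E] [Module 𝕜 E] [TopologicalSpace E] [ContinuousAdd E]
    [AddCommGroup F] [Module 𝕜 F] [TopologicalSpace F]
    (p : E →L[𝕜] F) (σ : F →L[𝕜] E) (h : Function.RightInverse σ p) : IsOpenMap p :=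
  IsOpenMap.of_sections fun x =>
    ⟨fun y => σ y + (x - σ (p x)), by fun_prop, by simp,
      fun y => by simp only [map_add, map_sub, h y, h (p x), sub_self, add_zero]⟩

section Restriction

variable {T : Type*} {B : T → Type*}

theorem restrFrom_image_restr_image (S R : Set T) (hSR : S ⊆ R) (X : Set (∀ t, B t)) :
    restrFrom S R hSR '' (restr R '' X) = restr S '' X := by
  rw [Set.image_image]
  rfl

theorem restr_extendZ [∀ t, Zero (B t)] (S : Set T) (y : ∀ t : S, B (t : T)) :
    restr S (extendZ S y) = y := by
  funext s
  simp [restr, extendZ, s.2]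

theorem extendZ_extendZ2 [∀ t, Zero (B t)] {S R : Set T} (hSR : S ⊆ R) (y : ∀ t : S, B (t : T)) :
    extendZ R (extendZ2 S R y) = extendZ S y := by
  funext t
  by_cases htR : t ∈ R
  · simp [extendZ, extendZ2, htR]
  · have htS : t ∉ S := fun htS => htR (hSR htS)
    simp [extendZ, htR, htS]

theorem RAdmissible.restr_apply_extendZ [∀ t, Zero (B t)] {X : Set (∀ t, B t)}
    {r : (∀ t, B t) → (∀ t, B t)} {S : Set T} (hS : RAdmissible X r S)
    {y : ∀ t : S, B (t : T)} (hy : y ∈ restr S '' X) : restr S (r (extendZ S y)) = y := by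
  rw [hS _ (by rwa [restr_extendZ]), restr_extendZ]

variable (B) {𝕜 : Type*} [Semiring 𝕜] [∀ t, AddCommMonoid (B t)] [∀ t, Module 𝕜 (B t)]
  [∀ t, TopologicalSpace (B t)]

def restrFromL (S R : Set T) (hSR : S ⊆ R) : (∀ t : R, B (t : T)) →L[𝕜] (∀ t : S, B (t : T)) :=
  ContinuousLinearMap.pi fun s : S => ContinuousLinearMap.proj (⟨s, hSR s.2⟩ : R)

open Classical in
noncomputable def extendZL (S : Set T) : (∀ t : S, B (t : T)) →L[𝕜] (∀ t, B t) :=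
  ContinuousLinearMap.pi fun t =>
    if h : t ∈ S then ContinuousLinearMap.proj (⟨t, h⟩ : S) else 0

@[simp]
theorem extendZL_apply (S : Set T) (y : ∀ t : S, B (t : T)) :
    extendZL B (𝕜 := 𝕜) S y = extendZ S y := by
  funext t
  by_cases h : t ∈ S <;> simp [extendZL, extendZ, h]

end Restriction

@[simp]
theorem coe_restrL {T : Type*} (B : T → Type*)
    [∀ t, NormedAddCommGroup (B t)] [∀ t, NormedSpace ℝ (B t)] (S : Set T) :
    ⇑(restrL B S) = restr S :=
  rfl

theorem restriction_between_admissible_images_is_open_split_surjection_general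
    {T : Type*} (B : T → Type*)
    [∀ t, NormedAddCommGroup (B t)] [∀ t, NormedSpace ℝ (B t)]
    (X : Submodule ℝ (∀ t, B t)) (r : (∀ t, B t) →L[ℝ] (∀ t, B t))
    (hrange : Set.range r = (X : Set (∀ t, B t)))
    (S R : Set T) (hSR : S ⊆ R)
    (hS : RAdmissible (X : Set (∀ t, B t)) r S) :
    restrFrom S R hSR '' ((Submodule.map (restrL B R).toLinearMap X : Set (∀ t : R, B (t : T))))
        = (Submodule.map (restrL B S).toLinearMap X : Set (∀ t : S, B (t : T))) ∧
    ∃ hm : Set.MapsTo (restrFrom S R hSR)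
        (Submodule.map (restrL B R).toLinearMap X : Set (∀ t : R, B (t : T)))
        (Submodule.map (restrL B S).toLinearMap X : Set (∀ t : S, B (t : T))),
      Continuous hm.restrict ∧ IsOpenMap hm.restrict ∧ Function.Surjective hm.restrict ∧
      ∃ σ : (Submodule.map (restrL B S).toLinearMap X) →L[ℝ]
          (Submodule.map (restrL B R).toLinearMap X),
        (∀ y : Submodule.map (restrL B S).toLinearMap X,
          (σ y : ∀ t : R, B (t : T)) =
            restr R (r (extendZ R (extendZ2 S R (y : ∀ t : S, B (t : T)))))) ∧
        (∀ y : Submodule.map (restrL B S).toLinearMap X,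
          restrFrom S R hSR (σ y : ∀ t : R, B (t : T)) = (y : ∀ t : S, B (t : T))) := by
  set PR := Submodule.map (restrL B R).toLinearMap X
  set PS := Submodule.map (restrL B S).toLinearMap X
  have himg : restrFrom S R hSR '' (PR : Set (∀ t : R, B (t : T))) = PS := by
    simp only [PR, PS, Submodule.map_coe, ContinuousLinearMap.coe_coe, coe_restrL]
    exact restrFrom_image_restr_image S R hSR (X : Set (∀ t, B t))
  have hm : Set.MapsTo (restrFrom S R hSR) (PR : Set (∀ t : R, B (t : T))) PS :=
    himg ▸ Set.mapsTo_image _ _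
  let p : PR →L[ℝ] PS := (restrFromL B S R hSR ∘L PR.subtypeL).codRestrict PS fun x => hm x.2
  let σ : PS →L[ℝ] PR := (restrL B R ∘L r ∘L extendZL B S ∘L PS.subtypeL).codRestrict PR
    fun y => ⟨_, hrange ▸ Set.mem_range_self _, rfl⟩
  have hpσ : Function.RightInverse σ p := fun y => Subtype.ext <| by
    change restr S (r (extendZL B S (y : ∀ t : S, B (t : T)))) = y
    rw [extendZL_apply]
    exact hS.restr_apply_extendZ y.2
  refine ⟨himg, hm, p.continuous, p.isOpenMap_of_rightInverse σ hpσ, hpσ.surjective, σ,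
    fun y => ?_, fun y => congrArg Subtype.val (hpσ y)⟩
  change restr R (r (extendZL B S (y : ∀ t : S, B (t : T)))) = _
  rw [extendZL_apply, extendZ_extendZ2 hSR]

theorem restriction_between_admissible_images_is_open_split_surjection
    {T : Type*} (B : T → Type*)
    [∀ t, NormedAddCommGroup (B t)] [∀ t, NormedSpace ℝ (B t)] [∀ t, CompleteSpace (B t)]
    (X : Submodule ℝ (∀ t, B t)) (r : (∀ t, B t) →L[ℝ] (∀ t, B t))
    (hrange : Set.range r = (X : Set (∀ t, B t))) (hfix : ∀ x ∈ X, r x = x)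
    (S R : Set T) (hSR : S ⊆ R)
    (hS : RAdmissible (X : Set (∀ t, B t)) r S) (hR : RAdmissible (X : Set (∀ t, B t)) r R) :
    restrFrom S R hSR '' ((Submodule.map (restrL B R).toLinearMap X : Set (∀ t : R, B (t : T))))
        = (Submodule.map (restrL B S).toLinearMap X : Set (∀ t : S, B (t : T))) ∧
    ∃ hm : Set.MapsTo (restrFrom S R hSR)
        (Submodule.map (restrL B R).toLinearMap X : Set (∀ t : R, B (t : T)))
        (Submodule.map (restrL B S).toLinearMap X : Set (∀ t : S, B (t : T))),
      Continuous hm.restrict ∧ IsOpenMap hm.restrict ∧ Function.Surjective hm.restrict ∧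
      ∃ σ : (Submodule.map (restrL B S).toLinearMap X) →L[ℝ]
          (Submodule.map (restrL B R).toLinearMap X),
        (∀ y : Submodule.map (restrL B S).toLinearMap X,
          (σ y : ∀ t : R, B (t : T)) =
            restr R (r (extendZ R (extendZ2 S R (y : ∀ t : S, B (t : T)))))) ∧
        (∀ y : Submodule.map (restrL B S).toLinearMap X,
          restrFrom S R hSR (σ y : ∀ t : R, B (t : T)) = (y : ∀ t : S, B (t : T))) :=
  restriction_between_admissible_images_is_open_split_surjection_general B X r hrange S R hSR hS
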